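/- Let n, m, s be positive integers. Assume a SUN_{n,s}(ξ,Ω,Δ,γ,Γ) prior density on f ∈ ℝⁿ and the probit affine likelihood L(f) := Φ_m(Z + W f; Σ) with W ∈ ℝ^{m×n}, Z ∈ ℝ^m and Σ ∈ ℝ^{m×m} symmetric positive definite. Then for every f ∈ ℝⁿ, Φ_m(Z + W f; Σ) · sun_{n,s}(f; ξ,Ω,Δ,γ,Γ) = (Φ_{s+m}(γ_p; Γ_p)/Φ_s(γ; Γ)) · sun_{n,s+m}(f; ξ, Ω, Δ_p, γ_p, Γ_p), where Δ_p := [Δ, Ω̄ D_Ω Wᵀ], γ_p := (γ, Z + Wξ), Γ_p := [[Γ, Δᵀ D_Ω Wᵀ],[W D_Ω Δ, W Ω Wᵀ + Σ]]; in particular the posterior density of f is the unified skew-normal density SUN_{n,s+m}(ξ, Ω, Δ_p, γ_p, Γ_p). (Lemma 2 of the paper.) -/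

import Mathlib

open MeasureTheory Matrix

/-- Centered multivariate normal density `φ(z; S)` with covariance `S`. -/
noncomputable def gaussPdf {ι : Type*} [Fintype ι] [DecidableEq ι]
    (S : Matrix ι ι ℝ) (z : ι → ℝ) : ℝ :=
  (2 * Real.pi) ^ (-(Fintype.card ι : ℝ) / 2) * S.det ^ (-(1 : ℝ) / 2) *
    Real.exp (-(1 / 2) * (z ⬝ᵥ (S⁻¹ *ᵥ z)))

/-- Centered multivariate normal CDF `Φ(a; S)` with covariance `S`. -/
noncomputable def gaussCdf {ι : Type*} [Fintype ι] [DecidableEq ι]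
    (S : Matrix ι ι ℝ) (a : ι → ℝ) : ℝ :=
  ∫ u in {u : ι → ℝ | ∀ i, u i ≤ a i}, gaussPdf S u

/-- `D_K`: diagonal matrix with entries `√(K i i)`. -/
noncomputable def dMat {ι : Type*} [Fintype ι] [DecidableEq ι]
    (K : Matrix ι ι ℝ) : Matrix ι ι ℝ :=
  Matrix.diagonal fun i => Real.sqrt (K i i)

/-- `K̄ := D_K⁻¹ K D_K⁻¹`: the correlation matrix associated with `K`. -/
noncomputable def corrMat {ι : Type*} [Fintype ι] [DecidableEq ι]
    (K : Matrix ι ι ℝ) : Matrix ι ι ℝ :=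
  (dMat K)⁻¹ * K * (dMat K)⁻¹

/-- The unified skew-normal density `sun(z; ξ, Ω, Δ, γ, Γ)`. -/
noncomputable def sunPdf {ι κ : Type*} [Fintype ι] [DecidableEq ι] [Fintype κ] [DecidableEq κ]
    (xi : ι → ℝ) (Om : Matrix ι ι ℝ) (De : Matrix ι κ ℝ) (ga : κ → ℝ) (Ga : Matrix κ κ ℝ)
    (z : ι → ℝ) : ℝ :=
  gaussPdf Om (z - xi) *
    gaussCdf (Ga - Deᵀ * (corrMat Om)⁻¹ * De)
      (ga + (Deᵀ * (corrMat Om)⁻¹ * (dMat Om)⁻¹) *ᵥ (z - xi)) /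
    gaussCdf Ga ga

/-!
The likelihood `Φ_m(Z + W f; Σ)` and the skewing factor `Φ_s(·; Γ - Δᵀ Ω̄⁻¹ Δ)` of the prior
combine into one Gaussian CDF with block-diagonal covariance `diag(Γ - Δᵀ Ω̄⁻¹ Δ, Σ)`, because
for a block-diagonal covariance the orthant integral factors. The posterior parameters are
exactly those for which `Γ_p - Δ_pᵀ Ω̄⁻¹ Δ_p` is this block-diagonal matrix and
`γ_p + Δ_pᵀ Ω̄⁻¹ D_Ω⁻¹ (f - ξ)` stacks the two arguments (using `Ω = D_Ω Ω̄ D_Ω`). Both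
normalising CDFs are positive, `Γ_p` being positive definite as the sum of that block-diagonal
matrix and `Δ_pᵀ Ω̄⁻¹ Δ_p`.
-/

open scoped MatrixOrder

lemma integrable_exp_neg_half_dotProduct_self {ι : Type*} [Fintype ι] :
    Integrable fun v : ι → ℝ => Real.exp (-(1 / 2) * (v ⬝ᵥ v)) := by
  have h1 : Integrable fun x : ℝ => Real.exp (-(1 / 2) * x ^ 2) := by
    simpa using integrable_exp_neg_mul_sq (by norm_num : (0 : ℝ) < 1 / 2)
  refine (Integrable.fintype_prod (f := fun (_ : ι) x => Real.exp (-(1 / 2) * x ^ 2))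
    fun _ => h1).congr (Filter.Eventually.of_forall fun v => ?_)
  simp only [dotProduct, Finset.mul_sum, Real.exp_sum, sq]

section Gaussian

variable {ι κ : Type*} [Fintype ι] [DecidableEq ι] [Fintype κ] [DecidableEq κ]

lemma gaussPdf_pos {S : Matrix ι ι ℝ} (hS : S.PosDef) (z : ι → ℝ) : 0 < gaussPdf S z := by
  have := hS.det_pos
  unfold gaussPdf
  positivity

lemma Matrix.PosDef.exists_isUnit_dotProduct_mulVec_eq {S : Matrix ι ι ℝ} (hS : S.PosDef) :
    ∃ B : Matrix ι ι ℝ, IsUnit B ∧ ∀ z, z ⬝ᵥ (S *ᵥ z) = (B *ᵥ z) ⬝ᵥ (B *ᵥ z) := by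
  refine ⟨CFC.sqrt S, hS.isStrictlyPositive.sqrt.isUnit, fun z => ?_⟩
  have hsq : S = star (CFC.sqrt S) * CFC.sqrt S := by
    rw [(CFC.sqrt_nonneg S).isSelfAdjoint.star_eq, CFC.sqrt_mul_sqrt_self S hS.posSemidef.nonneg]
  conv_lhs => rw [hsq]
  rw [← mulVec_mulVec, dotProduct_mulVec, star_eq_conjTranspose,
    conjTranspose_eq_transpose_of_trivial, vecMul_transpose]

lemma MeasureTheory.Integrable.comp_mulVec {g : (ι → ℝ) → ℝ} (hg : Integrable g)
    {B : Matrix ι ι ℝ} (hB : IsUnit B) : Integrable fun z => g (B *ᵥ z) := by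
  have hdet : B.det ≠ 0 := ((isUnit_iff_isUnit_det B).mp hB).ne_zero
  have hmap : Integrable g (Measure.map (toLin' B) volume) := by
    rw [Real.map_matrix_volume_pi_eq_smul_volume_pi hdet]
    exact hg.smul_measure ENNReal.ofReal_ne_top
  exact (integrable_map_measure hmap.aestronglyMeasurable
    (LinearMap.continuous_of_finiteDimensional _).measurable.aemeasurable).mp hmap

lemma integrable_gaussPdf {S : Matrix ι ι ℝ} (hS : S.PosDef) : Integrable (gaussPdf S) := by
  obtain ⟨B, hB, hq⟩ := hS.inv.exists_isUnit_dotProduct_mulVec_eq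
  have hpdf : gaussPdf S = fun z => ((2 * Real.pi) ^ (-(Fintype.card ι : ℝ) / 2) *
      S.det ^ (-(1 : ℝ) / 2)) * Real.exp (-(1 / 2) * ((B *ᵥ z) ⬝ᵥ (B *ᵥ z))) := by
    ext z
    rw [gaussPdf, hq z]
  rw [hpdf]
  exact (integrable_exp_neg_half_dotProduct_self.comp_mulVec hB).const_mul _

lemma gaussCdf_pos {S : Matrix ι ι ℝ} (hS : S.PosDef) (a : ι → ℝ) : 0 < gaussCdf S a := by
  have hsupp : Function.support (gaussPdf S) = Set.univ :=
    Set.eq_univ_of_forall fun z => (gaussPdf_pos hS z).ne'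
  rw [gaussCdf, setIntegral_pos_iff_support_of_nonneg_ae
    (Filter.Eventually.of_forall fun z => (gaussPdf_pos hS z).le)
    (integrable_gaussPdf hS).integrableOn, hsupp, Set.univ_inter]
  change 0 < volume (Set.Iic a)
  rw [← Set.pi_univ_Iic, volume_pi_pi]
  simpa using ENNReal.pow_pos (by simp) _

end Gaussian

section BlockDiagonal

variable {ι κ : Type*} [Fintype ι] [Fintype κ]

lemma dotProduct_fromBlocks_zero_mulVec {α : Type*} [NonUnitalNonAssocSemiring α]
    (A : Matrix ι ι α) (B : Matrix κ κ α) (u : ι ⊕ κ → α) :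
    u ⬝ᵥ (fromBlocks A 0 0 B *ᵥ u) =
      (u ∘ Sum.inl) ⬝ᵥ (A *ᵥ (u ∘ Sum.inl)) + (u ∘ Sum.inr) ⬝ᵥ (B *ᵥ (u ∘ Sum.inr)) := by
  conv_lhs => rw [← Sum.elim_comp_inl_inr u, fromBlocks_mulVec, sumElim_dotProduct_sumElim]
  simp

variable [DecidableEq ι] [DecidableEq κ]

lemma Matrix.PosDef.fromBlocks_zero {A : Matrix ι ι ℝ} {B : Matrix κ κ ℝ}
    (hA : A.PosDef) (hB : B.PosDef) : (fromBlocks A 0 0 B).PosDef := by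
  have := hB.isUnit.invertible
  have hpsd : (fromBlocks A 0 0ᴴ B).PosSemidef :=
    (PosDef.fromBlocks₂₂ A 0 hB).mpr (by simpa using hA.posSemidef)
  rw [conjTranspose_zero] at hpsd
  exact hpsd.posDef_iff_det_ne_zero.mpr
    (by rw [det_fromBlocks_zero₁₂]; exact (mul_pos hA.det_pos hB.det_pos).ne')

lemma Matrix.PosDef.schur_complement₂₂ {A : Matrix ι ι ℝ} {B : Matrix κ ι ℝ}
    {D : Matrix κ κ ℝ} (h : (fromBlocks A Bᵀ B D).PosDef) : (A - Bᵀ * D⁻¹ * B).PosDef := by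
  have hD : D.PosDef := h.submatrix Sum.inr_injective
  have := hD.isUnit.invertible
  have hpsd : (A - Bᵀ * D⁻¹ * B).PosSemidef := by
    simpa [conjTranspose_eq_transpose_of_trivial] using (PosDef.fromBlocks₂₂ A Bᵀ hD).mp
      (by simpa [conjTranspose_eq_transpose_of_trivial] using h.posSemidef)
  refine hpsd.posDef_iff_det_ne_zero.mpr fun h0 => h.det_pos.ne' ?_
  rw [det_fromBlocks₂₂, invOf_eq_nonsing_inv, h0, mul_zero]

lemma inv_fromBlocks_zero {α : Type*} [CommRing α] {A : Matrix ι ι α} {B : Matrix κ κ α}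
    (hA : IsUnit A) (hB : IsUnit B) : (fromBlocks A 0 0 B)⁻¹ = fromBlocks A⁻¹ 0 0 B⁻¹ := by
  simpa using inv_fromBlocks_zero₁₂_of_isUnit_iff A 0 B (iff_of_true hA hB)

lemma gaussPdf_fromBlocks_zero {A : Matrix ι ι ℝ} {B : Matrix κ κ ℝ}
    (hA : A.PosDef) (hB : B.PosDef) (u : ι ⊕ κ → ℝ) :
    gaussPdf (fromBlocks A 0 0 B) u = gaussPdf A (u ∘ Sum.inl) * gaussPdf B (u ∘ Sum.inr) := by
  simp only [gaussPdf, inv_fromBlocks_zero hA.isUnit hB.isUnit, dotProduct_fromBlocks_zero_mulVec,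
    det_fromBlocks_zero₁₂, Fintype.card_sum, Nat.cast_add]
  rw [Real.mul_rpow hA.det_pos.le hB.det_pos.le, neg_add, add_div,
    Real.rpow_add (by positivity), mul_add, Real.exp_add]
  ring

lemma gaussCdf_fromBlocks_zero {A : Matrix ι ι ℝ} {B : Matrix κ κ ℝ}
    (hA : A.PosDef) (hB : B.PosDef) (a : ι → ℝ) (b : κ → ℝ) :
    gaussCdf (fromBlocks A 0 0 B) (Sum.elim a b) = gaussCdf A a * gaussCdf B b := by
  let e := (MeasurableEquiv.sumPiEquivProdPi fun _ : ι ⊕ κ => ℝ).symm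
  have hpre : e ⁻¹' {u | ∀ i, u i ≤ Sum.elim a b i} =
      {x : ι → ℝ | ∀ i, x i ≤ a i} ×ˢ {y : κ → ℝ | ∀ i, y i ≤ b i} := by
    ext ⟨x, y⟩
    simp only [Set.mem_preimage, Set.mem_ofPred_eq, Set.mem_prod, Sum.forall]
    rfl
  rw [gaussCdf, ← (volume_measurePreserving_sumPiEquivProdPi_symm _).setIntegral_preimage_emb
    e.measurableEmbedding, hpre, Measure.volume_eq_prod]
  simp only [gaussPdf_fromBlocks_zero hA hB]
  exact setIntegral_prod_mul (gaussPdf A) (gaussPdf B) _ _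

end BlockDiagonal

section Correlation

variable {ι : Type*} [Fintype ι] [DecidableEq ι] {K : Matrix ι ι ℝ}

lemma dMat_transpose (K : Matrix ι ι ℝ) : (dMat K)ᵀ = dMat K :=
  diagonal_transpose _

lemma isUnit_dMat (hK : K.PosDef) : IsUnit (dMat K) :=
  isUnit_diagonal.mpr <| Pi.isUnit_iff.mpr fun _ => (Real.sqrt_pos.mpr hK.diag_pos).ne'.isUnit

lemma corrMat_posDef (hK : K.PosDef) : (corrMat K).PosDef := by
  have hD : ((dMat K)⁻¹)ᴴ = (dMat K)⁻¹ := by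
    rw [conjTranspose_eq_transpose_of_trivial, transpose_nonsing_inv, dMat_transpose]
  simpa only [corrMat, hD] using hK.conjTranspose_mul_mul_same
    (mulVec_injective_iff_isUnit.mpr (isUnit_nonsing_inv_iff.mpr (isUnit_dMat hK)))

lemma dMat_mul_corrMat_mul_dMat (hK : K.PosDef) : dMat K * corrMat K * dMat K = K := by
  have hD := isUnit_dMat hK
  simp only [corrMat, Matrix.mul_assoc, nonsing_inv_mul _ ((isUnit_iff_isUnit_det _).mp hD),
    Matrix.mul_one]
  rw [← Matrix.mul_assoc, mul_nonsing_inv _ ((isUnit_iff_isUnit_det _).mp hD), Matrix.one_mul]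

end Correlation

section ProbitPosterior

variable {n s m : Type*} [Fintype n] [DecidableEq n] {Om : Matrix n n ℝ}
  (De : Matrix n s ℝ) (W : Matrix m n ℝ)

/-- The posterior `Δ_p`. -/
noncomputable def probitDelta (Om : Matrix n n ℝ) (De : Matrix n s ℝ) (W : Matrix m n ℝ) :
    Matrix n (s ⊕ m) ℝ :=
  fromCols De (corrMat Om * dMat Om * Wᵀ)

/-- The posterior `Γ_p`. -/
noncomputable def probitGamma (Om : Matrix n n ℝ) (De : Matrix n s ℝ) (Ga : Matrix s s ℝ)
    (W : Matrix m n ℝ) (Sg : Matrix m m ℝ) : Matrix (s ⊕ m) (s ⊕ m) ℝ :=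
  fromBlocks Ga (Deᵀ * dMat Om * Wᵀ) (W * dMat Om * De) (W * Om * Wᵀ + Sg)

lemma probitDelta_transpose_mul_inv_corrMat (hOm : Om.PosDef) :
    (probitDelta Om De W)ᵀ * (corrMat Om)⁻¹ = fromRows (Deᵀ * (corrMat Om)⁻¹) (W * dMat Om) := by
  have hC := (corrMat_posDef hOm).isUnit
  have hCT : (corrMat Om)ᵀ = corrMat Om := by
    simpa [conjTranspose_eq_transpose_of_trivial] using (corrMat_posDef hOm).isHermitian.eq
  rw [probitDelta, transpose_fromCols, fromRows_mul, transpose_mul, transpose_mul,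
    transpose_transpose, dMat_transpose, hCT, Matrix.mul_assoc, Matrix.mul_assoc,
    mul_nonsing_inv _ ((isUnit_iff_isUnit_det _).mp hC), Matrix.mul_one]

lemma probitGamma_sub_probitDelta (hOm : Om.PosDef) (Ga : Matrix s s ℝ) (Sg : Matrix m m ℝ) :
    probitGamma Om De Ga W Sg - (probitDelta Om De W)ᵀ * (corrMat Om)⁻¹ * probitDelta Om De W =
      fromBlocks (Ga - Deᵀ * (corrMat Om)⁻¹ * De) 0 0 Sg := by
  have hC := (isUnit_iff_isUnit_det _).mp (corrMat_posDef hOm).isUnit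
  have h₁₂ : Deᵀ * (corrMat Om)⁻¹ * (corrMat Om * dMat Om * Wᵀ) = Deᵀ * dMat Om * Wᵀ := by
    simp only [Matrix.mul_assoc, nonsing_inv_mul_cancel_left _ _ hC]
  have h₂₂ : W * dMat Om * (corrMat Om * dMat Om * Wᵀ) = W * Om * Wᵀ := by
    conv_rhs => rw [← dMat_mul_corrMat_mul_dMat hOm]
    simp only [Matrix.mul_assoc]
  rw [probitDelta_transpose_mul_inv_corrMat De W hOm, probitDelta, fromRows_mul_fromCols, h₁₂,
    h₂₂, probitGamma, sub_eq_add_neg, fromBlocks_neg, fromBlocks_add]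
  simp only [← sub_eq_add_neg, sub_self, add_sub_cancel_left]

lemma sumElim_add_probitDelta_mulVec (hOm : Om.PosDef) (ga : s → ℝ) (Z : m → ℝ)
    (xi f : n → ℝ) :
    Sum.elim ga (Z + W *ᵥ xi) +
        ((probitDelta Om De W)ᵀ * (corrMat Om)⁻¹ * (dMat Om)⁻¹) *ᵥ (f - xi) =
      Sum.elim (ga + (Deᵀ * (corrMat Om)⁻¹ * (dMat Om)⁻¹) *ᵥ (f - xi)) (Z + W *ᵥ f) := by
  have hD := (isUnit_iff_isUnit_det _).mp (isUnit_dMat hOm)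
  rw [probitDelta_transpose_mul_inv_corrMat De W hOm, fromRows_mul, Matrix.mul_assoc W,
    mul_nonsing_inv _ hD, Matrix.mul_one, fromRows_mulVec, ← Sum.elim_add_add, mulVec_sub W,
    add_add_sub_cancel]

lemma probitGamma_posDef [Fintype s] [DecidableEq s] [Fintype m] [DecidableEq m]
    (hOm : Om.PosDef) {Ga : Matrix s s ℝ} {Sg : Matrix m m ℝ}
    (hS : (Ga - Deᵀ * (corrMat Om)⁻¹ * De).PosDef) (hSg : Sg.PosDef) :
    (probitGamma Om De Ga W Sg).PosDef := by
  have hpsd : ((probitDelta Om De W)ᵀ * (corrMat Om)⁻¹ * probitDelta Om De W).PosSemidef := by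
    simpa [conjTranspose_eq_transpose_of_trivial] using
      (corrMat_posDef hOm).inv.posSemidef.conjTranspose_mul_mul_same (probitDelta Om De W)
  rw [← sub_add_cancel (probitGamma Om De Ga W Sg), probitGamma_sub_probitDelta De W hOm]
  exact (hS.fromBlocks_zero hSg).add_posSemidef hpsd

end ProbitPosterior

theorem sun_probit_affine_conjugate_general
    {n m s : ℕ}
    (xi : Fin n → ℝ) (Om : Matrix (Fin n) (Fin n) ℝ) (hOm : Om.PosDef)
    (De : Matrix (Fin n) (Fin s) ℝ) (ga : Fin s → ℝ)
    (Ga : Matrix (Fin s) (Fin s) ℝ)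
    (hM : (Matrix.fromBlocks Ga Deᵀ De (corrMat Om)).PosDef)
    (W : Matrix (Fin m) (Fin n) ℝ) (Z : Fin m → ℝ)
    (Sg : Matrix (Fin m) (Fin m) ℝ) (hSg : Sg.PosDef)
    (Dep : Matrix (Fin n) (Fin s ⊕ Fin m) ℝ) (gap : Fin s ⊕ Fin m → ℝ)
    (Gap : Matrix (Fin s ⊕ Fin m) (Fin s ⊕ Fin m) ℝ)
    (hDep : Dep = Matrix.fromCols De (corrMat Om * dMat Om * Wᵀ))
    (hgap : gap = Sum.elim ga (Z + W *ᵥ xi))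
    (hGap : Gap = Matrix.fromBlocks Ga (Deᵀ * dMat Om * Wᵀ) (W * dMat Om * De)
      (W * Om * Wᵀ + Sg)) :
    ∀ f : Fin n → ℝ,
      gaussCdf Sg (Z + W *ᵥ f) * sunPdf xi Om De ga Ga f =
        (gaussCdf Gap gap / gaussCdf Ga ga) * sunPdf xi Om Dep gap Gap f := by
  intro f
  obtain rfl : Dep = probitDelta Om De W := hDep
  obtain rfl : Gap = probitGamma Om De Ga W Sg := hGap
  subst hgap
  have hS : (Ga - Deᵀ * (corrMat Om)⁻¹ * De).PosDef := hM.schur_complement₂₂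
  have hGa : 0 < gaussCdf Ga ga := gaussCdf_pos (hM.submatrix Sum.inl_injective) ga
  have hGap : 0 < gaussCdf (probitGamma Om De Ga W Sg) (Sum.elim ga (Z + W *ᵥ xi)) :=
    gaussCdf_pos (probitGamma_posDef De W hOm hS hSg) _
  rw [sunPdf, sunPdf, probitGamma_sub_probitDelta De W hOm,
    sumElim_add_probitDelta_mulVec De W hOm, gaussCdf_fromBlocks_zero hS hSg]
  field_simp

/-- Lemma 2: the SUN prior is conjugate to the probit affine likelihood. -/
theorem sun_probit_affine_conjugate
    {n m s : ℕ} (hn : 0 < n) (hm : 0 < m) (hs : 0 < s)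
    (xi : Fin n → ℝ) (Om : Matrix (Fin n) (Fin n) ℝ) (hOm : Om.PosDef)
    (De : Matrix (Fin n) (Fin s) ℝ) (ga : Fin s → ℝ)
    (Ga : Matrix (Fin s) (Fin s) ℝ) (hGa : Ga.IsSymm)
    (hM : (Matrix.fromBlocks Ga Deᵀ De (corrMat Om)).PosDef)
    (W : Matrix (Fin m) (Fin n) ℝ) (Z : Fin m → ℝ)
    (Sg : Matrix (Fin m) (Fin m) ℝ) (hSg : Sg.PosDef)
    (Dep : Matrix (Fin n) (Fin s ⊕ Fin m) ℝ) (gap : Fin s ⊕ Fin m → ℝ)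
    (Gap : Matrix (Fin s ⊕ Fin m) (Fin s ⊕ Fin m) ℝ)
    (hDep : Dep = Matrix.fromCols De (corrMat Om * dMat Om * Wᵀ))
    (hgap : gap = Sum.elim ga (Z + W *ᵥ xi))
    (hGap : Gap = Matrix.fromBlocks Ga (Deᵀ * dMat Om * Wᵀ) (W * dMat Om * De)
      (W * Om * Wᵀ + Sg)) :
    ∀ f : Fin n → ℝ,
      gaussCdf Sg (Z + W *ᵥ f) * sunPdf xi Om De ga Ga f =
        (gaussCdf Gap gap / gaussCdf Ga ga) * sunPdf xi Om Dep gap Gap f :=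
  sun_probit_affine_conjugate_general xi Om hOm De ga Ga hM W Z Sg hSg Dep gap Gap hDep hgap hGap
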